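/- Let (x,ρ,B) be a generalized seed. Let x_1' be the cluster variable exchanged with x_1 in μ_1(x,ρ,B), let x_2' be the cluster variable exchanged with x_2 in μ_2(x,ρ,B), and let x_2'' be the cluster variable exchanged with x_2 in μ_2μ_1(x,ρ,B). Then, as subrings of the ambient field 𝓕, R[x_1, x_1', x_2, x_2', x_3^{±1},…,x_{n+m}^{±1}] = R[x_1, x_1', x_2, x_2'', x_3^{±1},…,x_{n+m}^{±1}]. -/

import Mathlib

open MvPolynomial

/-! ### Generic factorization-theoretic notions -/

/-- A domain is atomic if every non-zero non-unit is a finite product of irreducibles. -/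
def Atomic (A : Type*) [CommMonoidWithZero A] : Prop :=
  ∀ a : A, a ≠ 0 → ¬ IsUnit a → ∃ s : Multiset A, (∀ b ∈ s, Irreducible b) ∧ s.prod = a

/-- An FF-domain: atomic, and every non-zero non-unit has only finitely many factorizations
into atoms up to order and associates. -/
def IsFFdomain (A : Type*) [CommMonoidWithZero A] [IsCancelMulZero A] : Prop :=
  Atomic A ∧ ∀ a : A, a ≠ 0 → ¬ IsUnit a →
    {s : Multiset (Associates A) | (∀ p ∈ s, Irreducible p) ∧ s.prod = Associates.mk a}.Finite

/-- A strong atom (absolutely irreducible element): an atom all of whose powers factor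
uniquely into atoms. -/
def IsStrongAtom {A : Type*} [CommMonoidWithZero A] [IsCancelMulZero A] (u : A) : Prop :=
  Irreducible u ∧ ∀ k : ℕ, 0 < k → ∀ s : Multiset (Associates A),
    (∀ p ∈ s, Irreducible p) → s.prod = Associates.mk (u ^ k) →
    s = Multiset.replicate k (Associates.mk u)

/-- The ground ring `R` is the ring of integers or a field of characteristic zero. -/
def GroundRing (R : Type*) [CommRing R] : Prop :=
  Nonempty (R ≃+* ℤ) ∨ (IsField R ∧ CharZero R)

/-! ### Height-one primes, Krull domains and divisor class groups -/

/-- A height-1 prime ideal of a domain: a non-zero prime ideal such that every prime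
strictly below it is zero. -/
def IsHeightOnePrime {A : Type*} [CommRing A] (p : Ideal A) : Prop :=
  p.IsPrime ∧ p ≠ ⊥ ∧ ∀ q : Ideal A, q.IsPrime → q < p → q = ⊥

/-- A Krull domain: the localization at every height-1 prime is a DVR, the domain is the
intersection of these localizations inside its quotient field, and every non-zero element
lies in only finitely many height-1 primes. -/
def IsKrullDomain (A : Type*) [CommRing A] [IsDomain A] : Prop :=
  (∀ p : Ideal A, ∀ hp : IsHeightOnePrime p,
     letI := hp.1
     IsDiscreteValuationRing (Localization.AtPrime p)) ∧
  (∀ z : FractionRing A,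
     (∀ p : Ideal A, IsHeightOnePrime p →
        ∃ a s : A, s ∉ p ∧ z * algebraMap A (FractionRing A) s = algebraMap A (FractionRing A) a) →
     ∃ a : A, z = algebraMap A (FractionRing A) a) ∧
  (∀ a : A, a ≠ 0 → {p : Ideal A | IsHeightOnePrime p ∧ a ∈ p}.Finite)

/-- The set (type) of height-1 prime ideals. -/
abbrev HeightOnePrimes (A : Type*) [CommRing A] : Type _ := {p : Ideal A // IsHeightOnePrime p}

/-- The valuation of an element at a prime `p`: the largest `k` such that the image of `a`
lies in the `k`-th power of the maximal ideal of the localization at `p` (for a Krull domain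
and a height-1 prime this is the usual essential valuation). -/
noncomputable def valAt {A : Type*} [CommRing A] (p : Ideal A) (hp : p.IsPrime) (a : A) : ℕ :=
  letI := hp
  sSup {k : ℕ | algebraMap A (Localization.AtPrime p) a ∈
    (Ideal.map (algebraMap A (Localization.AtPrime p)) p) ^ k}

/-- The principal divisor of an element of `A`, as an element of the free abelian group
on the height-1 primes (defined to be `0` in the degenerate case of infinite support). -/
noncomputable def divOf {A : Type*} [CommRing A] (a : A) : HeightOnePrimes A →₀ ℤ :=
  letI := Classical.propDecidable
  if h : (Function.support fun p : HeightOnePrimes A => ((valAt p.1 p.2.1 a : ℕ) : ℤ)).Finite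
  then Finsupp.ofSupportFinite _ h else 0

/-- The subgroup of principal divisors: divisors of non-zero elements of the quotient field. -/
noncomputable def principalDivisors (A : Type*) [CommRing A] : AddSubgroup (HeightOnePrimes A →₀ ℤ) :=
  AddSubgroup.closure {d | ∃ a b : A, a ≠ 0 ∧ b ≠ 0 ∧ d = divOf a - divOf b}

/-- The (divisor) class group of a Krull domain: the free abelian group on the height-1
primes modulo principal divisors. -/
abbrev ClassGrp (A : Type*) [CommRing A] : Type _ :=
  (HeightOnePrimes A →₀ ℤ) ⧸ principalDivisors A

/-- The class of a height-1 prime ideal in the class group. -/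
noncomputable def primeClass {A : Type*} [CommRing A] (p : HeightOnePrimes A) : ClassGrp A :=
  QuotientAddGroup.mk (Finsupp.single p 1)

/-! ### Laurent polynomial subalgebras -/

/-- The Laurent polynomial ring `R[y₁^{±1},…,y_k^{±1}]` inside a field `F`. -/
def laurentOf (R : Type*) [CommRing R] {F : Type*} [Field F] [Algebra R F] {k : ℕ}
    (y : Fin k → F) : Subalgebra R F :=
  Algebra.adjoin R (Set.range y ∪ Set.range fun j => (y j)⁻¹)

/-! ### Generalized seeds -/

section GCA

variable (R : Type*) [CommRing R] [IsDomain R] (n m : ℕ) (F : Type*) [Field F] [Algebra R F]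

/-- A generalized seed of rank `n` with `m` frozen variables in the ambient field `F`:
an extended cluster of `n + m` algebraically independent elements, an `(n+m) × n` exchange
matrix whose principal part is skew-symmetrizable, together with strings of coefficient
monomials in the frozen variables. -/
structure GSeed where
  x : Fin (n + m) → F
  B : Matrix (Fin (n + m)) (Fin n) ℤ
  d : Fin n → ℕ
  ρ : Fin n → ℕ → MvPolynomial (Fin m) R
  algInd : AlgebraicIndependent R x
  skewSymmetrizable : ∃ D : Fin n → ℤ, (∀ i, 0 < D i) ∧
    ∀ i j : Fin n, D i * B (Fin.castAdd m i) j = - (D j * B (Fin.castAdd m j) i)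
  d_pos : ∀ i, 0 < d i
  d_dvd : ∀ i j, (d i : ℤ) ∣ B j i
  ρ_zero : ∀ i, ρ i 0 = 1
  ρ_last : ∀ i, ρ i (d i) = 1
  ρ_monomial : ∀ i j, j ≤ d i → ∃ (c : R) (a : Fin m →₀ ℕ), ρ i j = MvPolynomial.monomial a c

variable {R n m F}

namespace GSeed

/-- `β k i = b_{k i} / d_i`. -/
def β (S : GSeed R n m F) (k : Fin (n + m)) (i : Fin n) : ℤ := S.B k i / S.d i

/-- The `i`-th exchange polynomial of a generalized seed, as a polynomial in the
(extended) cluster variables. -/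
noncomputable def exchPoly (S : GSeed R n m F) (i : Fin n) : MvPolynomial (Fin (n + m)) R :=
  ∑ j ∈ Finset.range (S.d i + 1),
    (MvPolynomial.rename (Fin.natAdd n) (S.ρ i j)) *
      ∏ k : Fin (n + m),
        (MvPolynomial.X k) ^ (j * (max (S.β k i) 0).toNat + (S.d i - j) * (max (-(S.β k i)) 0).toNat)

/-- The value of the `i`-th exchange polynomial at the cluster. -/
noncomputable def exch (S : GSeed R n m F) (i : Fin n) : F :=
  MvPolynomial.aeval S.x (S.exchPoly i)

/-- The cluster obtained by mutating the cluster of `S` in direction `i`. -/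
noncomputable def mutX (S : GSeed R n m F) (i : Fin n) : Fin (n + m) → F :=
  Function.update S.x (Fin.castAdd m i) (S.exch i / S.x (Fin.castAdd m i))

/-- Fomin–Zelevinsky matrix mutation in direction `i`. -/
def matMut (B : Matrix (Fin (n + m)) (Fin n) ℤ) (i : Fin n) : Matrix (Fin (n + m)) (Fin n) ℤ :=
  fun k l => if k = Fin.castAdd m i ∨ l = i then - B k l
    else B k l + (max (B (Fin.castAdd m i) l) 0 * B k i + B (Fin.castAdd m i) l * max (-(B k i)) 0)

/-- `S'` is the mutation of the generalized seed `S` in direction `i`. -/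
def IsMutation (S S' : GSeed R n m F) (i : Fin n) : Prop :=
  S'.x = S.mutX i ∧
  S'.B = matMut S.B i ∧
  S'.d = S.d ∧
  (∀ j ≤ S.d i, S'.ρ i j = S.ρ i (S.d i - j)) ∧
  (∀ i' : Fin n, i' ≠ i → ∀ j ≤ S.d i', S'.ρ i' j = S.ρ i' j)

/-- Mutation equivalence of generalized seeds. -/
def MutEquiv (S S' : GSeed R n m F) : Prop :=
  Relation.EqvGen (fun T T' => ∃ i, IsMutation T T' i) S S'

/-- The set of all cluster variables of all seeds mutation-equivalent to `S`. -/
def clusterVars (S : GSeed R n m F) : Set F :=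
  {z | ∃ S' : GSeed R n m F, S.MutEquiv S' ∧ ∃ i : Fin n, z = S'.x (Fin.castAdd m i)}

/-- The generalized cluster algebra of a generalized seed. -/
noncomputable def gca (S : GSeed R n m F) : Subalgebra R F :=
  Algebra.adjoin R (S.clusterVars ∪
    Set.range (fun k : Fin m => S.x (Fin.natAdd n k)) ∪
    Set.range (fun k : Fin m => (S.x (Fin.natAdd n k))⁻¹))

/-- The generalized upper cluster algebra: the intersection of the Laurent polynomial rings
of all clusters mutation-equivalent to the initial one. -/
noncomputable def guca (S : GSeed R n m F) : Subalgebra R F :=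
  ⨅ (S' : GSeed R n m F) (_ : S.MutEquiv S'), laurentOf R S'.x

/-- The upper bound of a seed: the intersection of the Laurent polynomial rings of the
cluster and its one-step mutations. -/
noncomputable def upperBound (S : GSeed R n m F) : Subalgebra R F :=
  laurentOf R S.x ⊓ ⨅ i : Fin n, laurentOf R (S.mutX i)

/-- A seed is coprime if its exchange polynomials are pairwise coprime in `R[x]`. -/
def Coprime (S : GSeed R n m F) : Prop :=
  ∀ i j : Fin n, i ≠ j →
    ∀ p : MvPolynomial (Fin (n + m)) R, p ∣ S.exchPoly i → p ∣ S.exchPoly j → IsUnit p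

/-- A seed is acyclic if its directed graph (an edge `a → b` whenever `b_{a b} > 0`)
has no directed cycles. -/
def Acyclic (S : GSeed R n m F) : Prop :=
  ∀ v : Fin (n + m),
    ¬ Relation.TransGen (fun a b : Fin (n + m) =>
        ∃ j : Fin n, Fin.castAdd m j = b ∧ 0 < S.B a j) v v

end GSeed

end GCA

/-! ### Laurent phenomenon (LP) seeds -/

section LP

variable (R : Type*) [CommRing R] [IsDomain R] (n : ℕ) (F : Type*) [Field F] [Algebra R F]

/-- An LP seed: a cluster of `n` algebraically independent elements together with
exchange polynomials `P i` which are irreducible elements of `R[x]`, not divisible by any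
variable, and not depending on the corresponding cluster variable. -/
structure LPSeed where
  x : Fin n → F
  P : Fin n → MvPolynomial (Fin n) R
  algInd : AlgebraicIndependent R x
  irred : ∀ i, Irreducible (P i)
  var_not_dvd : ∀ i j : Fin n, ¬ (MvPolynomial.X j ∣ P i)
  indep : ∀ i, MvPolynomial.degreeOf i (P i) = 0

variable {R n F}

namespace LPSeed

/-- The exponent `a_k` in the exchange Laurent polynomial `F̂_j`: the maximal `a` such that
`F_k^a` divides `F_j |_{x_k ← F_k / x}` (the variable `x⁻¹` being encoded by the now unused
slot `k`). -/
noncomputable def hatExp (S : LPSeed R n F) (j k : Fin n) : ℕ :=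
  sSup {a : ℕ | (S.P k) ^ a ∣
    MvPolynomial.aeval
      (Function.update (MvPolynomial.X : Fin n → MvPolynomial (Fin n) R) k
        (S.P k * MvPolynomial.X k)) (S.P j)}

/-- The value of the exchange Laurent polynomial `F̂_j` at the cluster. -/
noncomputable def hatVal (S : LPSeed R n F) (j : Fin n) : F :=
  MvPolynomial.aeval S.x (S.P j) / ∏ k ∈ Finset.univ.erase j, (S.x k) ^ (S.hatExp j k)

/-- The cluster obtained by LP mutation in direction `k`. -/
noncomputable def mutX (S : LPSeed R n F) (k : Fin n) : Fin n → F :=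
  Function.update S.x k (S.hatVal k / S.x k)

/-- The (numerator of the) Laurent polynomial `F̂_k |_{x_i ← 0}`. -/
noncomputable def hatZero (S : LPSeed R n F) (k i : Fin n) : MvPolynomial (Fin n) R :=
  MvPolynomial.aeval
    (Function.update (MvPolynomial.X : Fin n → MvPolynomial (Fin n) R) i 0) (S.P k)

/-- The value `N_k = (F̂_k |_{x_i ← 0}) / x_k'` used in LP mutation. -/
noncomputable def NVal (S : LPSeed R n F) (k i : Fin n) : F :=
  (MvPolynomial.aeval S.x (S.hatZero k i) /
      ∏ l ∈ (Finset.univ.erase k).erase i, (S.x l) ^ (S.hatExp k l)) /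
    (S.hatVal k / S.x k)

/-- `S'` is obtained from the LP seed `S` by LP mutation in direction `k` (up to the unit
rescalings allowed by the equivalence of LP seeds): the new cluster variable is
`x_k' = F̂_k / x_k`; exchange polynomials not depending on `x_k` are unchanged (up to units);
for the others, `F_i' = M · H_i` where `H_i` is `G_i = F_i |_{x_k ← N_k}` with all common
factors with `F̂_k |_{x_i ← 0}` removed, and `M` is a Laurent monomial in the new cluster. -/
def IsMutation (S S' : LPSeed R n F) (k : Fin n) : Prop :=
  S'.x = S.mutX k ∧
  (∀ i, MvPolynomial.degreeOf k (S.P i) = 0 → ∃ u : Rˣ, S'.P i = MvPolynomial.C (u : R) * S.P i) ∧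
  (∀ i, MvPolynomial.degreeOf k (S.P i) ≠ 0 →
    ∃ (Cf : MvPolynomial (Fin n) R) (mexp : Fin n → ℤ) (u : Rˣ),
      (∀ q : MvPolynomial (Fin n) R, Prime q → q ∣ Cf → q ∣ S.hatZero k i) ∧
      (∀ q : MvPolynomial (Fin n) R, Prime q → q ∣ S'.P i → ¬ q ∣ S.hatZero k i) ∧
      MvPolynomial.aeval (Function.update S.x k (S.NVal k i)) (S.P i) =
        algebraMap R F (u : R) * MvPolynomial.aeval (S.mutX k) Cf *
          MvPolynomial.aeval (S.mutX k) (S'.P i) * ∏ l, (S.mutX k l) ^ (mexp l))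

/-- Equivalence of LP seeds: rescaling cluster variables and exchange polynomials by units. -/
def SeedEquiv (S S' : LPSeed R n F) : Prop :=
  ∀ i, (∃ r : Rˣ, S'.x i = algebraMap R F (r : R) * S.x i) ∧
    (∃ u : Rˣ, S'.P i = MvPolynomial.C (u : R) * S.P i)

/-- Mutation equivalence of LP seeds. -/
def MutEquiv (S S' : LPSeed R n F) : Prop :=
  Relation.EqvGen (fun T T' => SeedEquiv T T' ∨ ∃ k, IsMutation T T' k) S S'

/-- The set of all cluster variables of all LP seeds mutation-equivalent to `S`. -/
def clusterVars (S : LPSeed R n F) : Set F :=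
  {z | ∃ S' : LPSeed R n F, S.MutEquiv S' ∧ ∃ i : Fin n, z = S'.x i}

/-- The LP algebra of an LP seed. -/
noncomputable def lpa (S : LPSeed R n F) : Subalgebra R F :=
  Algebra.adjoin R S.clusterVars

/-- The upper LP algebra of an LP seed. -/
noncomputable def upperLpa (S : LPSeed R n F) : Subalgebra R F :=
  ⨅ (S' : LPSeed R n F) (_ : S.MutEquiv S'), laurentOf R S'.x

end LPSeed

end LP


set_option linter.unusedSectionVars false
set_option maxHeartbeats 1000000

section Helpers

variable {R : Type} [CommRing R] [IsDomain R] {n m : ℕ} {F : Type} [Field F] [Algebra R F]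

/-- helper: integer powers stay in a subalgebra when both the element and its inverse are in. -/
lemma zpow_mem_of {A : Subalgebra R F} {x : F} (hx : x ∈ A) (hxi : x⁻¹ ∈ A) (z : ℤ) :
    x ^ z ∈ A := by
  cases z with
  | ofNat k => simpa using A.pow_mem hx k
  | negSucc k =>
      rw [zpow_negSucc, ← inv_pow]
      exact A.pow_mem hxi (k + 1)

lemma aeval_frozen_mem {A : Subalgebra R F} {g : Fin m → F} (hg : ∀ k, g k ∈ A)
    (p : MvPolynomial (Fin m) R) : aeval g p ∈ A := by
  induction p using MvPolynomial.induction_on with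
  | C a => simpa using A.algebraMap_mem a
  | add p q hp hq => rw [map_add]; exact A.add_mem hp hq
  | mul_X p i hp => rw [map_mul, aeval_X]; exact A.mul_mem hp (hg i)

lemma aeval_congr_frozen {g g' : Fin m → F} (hgg : g = g') (p : MvPolynomial (Fin m) R) :
    aeval g p = aeval g' p := by rw [hgg]

/-- The exponent of `X k` in term `j` of the `i`-th exchange polynomial. -/
def expE (T : GSeed R n m F) (k : Fin (n + m)) (i : Fin n) (j : ℕ) : ℕ :=
  j * (max (T.β k i) 0).toNat + (T.d i - j) * (max (-(T.β k i)) 0).toNat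

lemma pow_eq_zpow_helper {x : F} (hx : x ≠ 0) (a c d e : ℕ) (b : ℤ)
    (h : (a : ℤ) = b + (c : ℤ) + (d : ℤ) * (e : ℤ)) :
    x ^ a = x ^ b * (x ^ c * (x ^ d) ^ e) := by
  rw [← pow_mul, ← pow_add, ← zpow_natCast x a, ← zpow_natCast x (c + d * e),
    ← zpow_add₀ hx]
  congr 1
  push_cast
  linarith [h]

lemma exch_expand (T : GSeed R n m F) (i : Fin n) (u : Fin (n + m)) :
    T.exch i = ∑ j ∈ Finset.range (T.d i + 1),
      aeval T.x (rename (Fin.natAdd n) (T.ρ i j)) *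
        ((T.x u) ^ expE T u i j * ∏ k ∈ Finset.univ.erase u, (T.x k) ^ expE T k i j) := by
  rw [GSeed.exch, GSeed.exchPoly, map_sum]
  refine Finset.sum_congr rfl fun j hj => ?_
  rw [map_mul, map_prod]
  congr 1
  rw [← Finset.mul_prod_erase Finset.univ _ (Finset.mem_univ u)]
  simp only [map_pow, aeval_X, expE]

end Helpers

section Statements

variable {R : Type} [CommRing R] [IsDomain R] {n m : ℕ} {F : Type} [Field F] [Algebra R F]

theorem gca_lemma4 (hR : GroundRing R) (S S1 : GSeed R n m F)
    (i0 i1 : Fin n) (hi0 : (i0 : ℕ) = 0) (hi1 : (i1 : ℕ) = 1)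
    (h1 : S.IsMutation S1 i0) :
    Algebra.adjoin R
      ({S.x (Fin.castAdd m i0), S.exch i0 / S.x (Fin.castAdd m i0),
        S.x (Fin.castAdd m i1), S.exch i1 / S.x (Fin.castAdd m i1)} ∪
        {z | ∃ j : Fin (n + m), j ≠ Fin.castAdd m i0 ∧ j ≠ Fin.castAdd m i1 ∧
          (z = S.x j ∨ z = (S.x j)⁻¹)}) =
    Algebra.adjoin R
      ({S.x (Fin.castAdd m i0), S.exch i0 / S.x (Fin.castAdd m i0),
        S.x (Fin.castAdd m i1), S1.exch i1 / S.x (Fin.castAdd m i1)} ∪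
        {z | ∃ j : Fin (n + m), j ≠ Fin.castAdd m i0 ∧ j ≠ Fin.castAdd m i1 ∧
          (z = S.x j ∨ z = (S.x j)⁻¹)}) := by
  clear hR
  obtain ⟨hx1eq, hBeq, hdeq, hρi, hρo⟩ := h1
  set u0 := Fin.castAdd m i0 with hu0
  set u1 := Fin.castAdd m i1 with hu1
  have hn : 1 < n := by have := i1.isLt; omega
  have hu01 : u0 ≠ u1 := by
    simp only [hu0, hu1, Fin.ne_iff_vne, Fin.coe_castAdd, hi0, hi1]; omega
  have hi01 : i1 ≠ i0 := by simp only [Fin.ne_iff_vne, hi0, hi1]; omega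
  have hx : ∀ k, S.x k ≠ 0 := fun k => S.algInd.ne_zero k
  have hx1 : S.x u0 ≠ 0 := hx u0
  have hx2 : S.x u1 ≠ 0 := hx u1
  set y := S.exch i0 / S.x u0 with hy
  have hf1 : S.x u0 * y = S.exch i0 := by
    rw [hy]; field_simp
  have hS1x : S1.x = Function.update S.x u0 y := by
    rw [hx1eq]; rfl
  have hS1xo : ∀ k, k ≠ u0 → S1.x k = S.x k := by
    intro k hk; rw [hS1x, Function.update_of_ne hk]
  have hfrozen : ∀ k : Fin m, S1.x (Fin.natAdd n k) = S.x (Fin.natAdd n k) := by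
    intro k
    refine hS1xo _ ?_
    simp only [hu0, Fin.ne_iff_vne, Fin.coe_natAdd, Fin.coe_castAdd]
    have := i0.isLt; omega
  have hren : ∀ p : MvPolynomial (Fin m) R,
      aeval S1.x (rename (Fin.natAdd n) p) = aeval S.x (rename (Fin.natAdd n) p) := by
    intro p
    rw [aeval_rename, aeval_rename]
    have hcomp : S1.x ∘ Fin.natAdd n = S.x ∘ Fin.natAdd n := funext fun k => hfrozen k
    rw [hcomp]
  set Cset : Set F := {z | ∃ j : Fin (n + m), j ≠ u0 ∧ j ≠ u1 ∧
      (z = S.x j ∨ z = (S.x j)⁻¹)} with hCset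
  -- divisibility facts
  have hd1 : 0 < S.d i0 := S.d_pos i0
  have hd : 0 < S.d i1 := S.d_pos i1
  have hβ1 : ∀ k, (S.d i0 : ℤ) * S.β k i0 = S.B k i0 := by
    intro k; exact Int.mul_ediv_cancel' (S.d_dvd i0 k)
  have hβ2 : ∀ k, (S.d i1 : ℤ) * S.β k i1 = S.B k i1 := by
    intro k; exact Int.mul_ediv_cancel' (S.d_dvd i1 k)
  have hS1d : S1.d i1 = S.d i1 := by rw [hdeq]
  have hβ2' : ∀ k, (S.d i1 : ℤ) * S1.β k i1 = S1.B k i1 := by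
    intro k
    have h' : S1.β k i1 = S1.B k i1 / (S.d i1 : ℤ) := by rw [GSeed.β, hdeq]
    rw [h']
    exact Int.mul_ediv_cancel' (by rw [← hdeq]; exact S1.d_dvd i1 k)
  -- diagonal entries vanish
  obtain ⟨D, hDpos, hskew⟩ := S.skewSymmetrizable
  have hdiag : ∀ i : Fin n, S.B (Fin.castAdd m i) i = 0 := by
    intro i
    have h0 := hskew i i
    have h2 : (2 : ℤ) * (D i * S.B (Fin.castAdd m i) i) = 0 := by linarith
    have h3 : D i * S.B (Fin.castAdd m i) i = 0 := by omega
    rcases mul_eq_zero.1 h3 with h | h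
    · exact absurd h (by have := hDpos i; omega)
    · exact h
  have hBu1i1 : S.B u1 i1 = 0 := hdiag i1
  have hskew01 : D i0 * S.B u0 i1 = -(D i1 * S.B u1 i0) := hskew i0 i1
  -- matrix mutation facts
  have hS1Bu0 : S1.B u0 i1 = - S.B u0 i1 := by
    rw [hBeq, GSeed.matMut]; simp [hu0]
  have hS1Bk : ∀ k, k ≠ u0 → S1.B k i1 = S.B k i1 +
      (max (S.B u0 i1) 0 * S.B k i0 + S.B u0 i1 * max (-(S.B k i0)) 0) := by
    intro k hk
    rw [hBeq, GSeed.matMut, if_neg]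
    push_neg
    exact ⟨hk, hi01⟩
  -- the trivial case b = 0
  by_cases hb0 : S.B u0 i1 = 0
  · have hc0 : S.B u1 i0 = 0 := by
      rw [hb0] at hskew01
      have := hDpos i1
      rcases mul_eq_zero.1 (by omega : D i1 * S.B u1 i0 = 0) with h | h
      · omega
      · exact h
    have hsame : S1.exch i1 = S.exch i1 := by
      have hβeq : ∀ k, S1.β k i1 = S.β k i1 := by
        intro k
        have hden : (S.d i1 : ℤ) ≠ 0 := by exact_mod_cast hd.ne'
        by_cases hk : k = u0
        · subst hk
          refine mul_left_cancel₀ hden ?_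
          rw [hβ2', hβ2, hS1Bu0, hb0]; ring
        · refine mul_left_cancel₀ hden ?_
          rw [hβ2', hβ2, hS1Bk k hk, hb0]; simp
      have hexpEq : ∀ k j, expE S1 k i1 j = expE S k i1 j := by
        intro k j
        rw [expE, expE, hβeq, hS1d]
      have hβu0 : S.β u0 i1 = 0 := by
        have hden : (S.d i1 : ℤ) ≠ 0 := by exact_mod_cast hd.ne'
        refine mul_left_cancel₀ hden ?_
        rw [hβ2, hb0]; ring
      have hexpu0 : ∀ j, expE S u0 i1 j = 0 := by
        intro j; rw [expE, hβu0]; simp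
      rw [exch_expand S1 i1 u0, exch_expand S i1 u0, hS1d]
      refine Finset.sum_congr rfl fun j hj => ?_
      have hj' : j ≤ S.d i1 := by
        simp only [Finset.mem_range] at hj; omega
      rw [hρo i1 hi01 j hj', hren]
      congr 1
      rw [hexpEq, hexpu0, pow_zero, pow_zero]
      congr 1
      refine Finset.prod_congr rfl fun k hk => ?_
      rw [hexpEq, hS1xo k (Finset.ne_of_mem_erase hk)]
    rw [hsame]
  -- main case : b ≠ 0
  set A0 := Algebra.adjoin R ({S.x u0, y, S.x u1} ∪ Cset) with hA0
  obtain ⟨P, p, q, r, M, M', N, Efac, h, hpq, hB2, hC2, hD2, hE2, hN0, hEf0, hrA, hMA,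
      ⟨hNA, hNiA⟩, ⟨hEfA, hEfiA⟩, hhA⟩ :
      ∃ (P : ℕ) (p q : ℕ → ℕ) (r M M' : ℕ → F) (N Efac h : F),
        (∀ j ∈ Finset.range (S.d i1 + 1), p j + q j = P) ∧
        S.exch i1 = ∑ j ∈ Finset.range (S.d i1 + 1), r j * (S.x u0 ^ p j * M j) ∧
        S1.exch i1 = ∑ j ∈ Finset.range (S.d i1 + 1), r j * (y ^ q j * M' j) ∧
        (∀ j ∈ Finset.range (S.d i1 + 1), M' j = Efac * (M j * N ^ p j)) ∧
        S.exch i0 = N + S.x u1 * h ∧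
        N ≠ 0 ∧ Efac ≠ 0 ∧
        (∀ j, r j ∈ A0) ∧ (∀ j, M j ∈ A0) ∧ (N ∈ A0 ∧ N⁻¹ ∈ A0) ∧
        (Efac ∈ A0 ∧ Efac⁻¹ ∈ A0) ∧ h ∈ A0 := by
    have hdne : (S.d i1 : ℤ) ≠ 0 := by exact_mod_cast hd.ne'
    have hd1ne : (S.d i0 : ℤ) ≠ 0 := by exact_mod_cast hd1.ne'
    have hr1A : ∀ (i' : Fin n) (j : ℕ),
        aeval S.x (rename (Fin.natAdd n) (S.ρ i' j)) ∈ A0 := by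
      intro i' j
      rw [aeval_rename]
      refine aeval_frozen_mem (fun k => ?_) _
      refine Algebra.subset_adjoin (Set.mem_union_right _ ?_)
      refine ⟨Fin.natAdd n k, ?_, ?_, Or.inl rfl⟩
      · simp only [hu0, Fin.ne_iff_vne, Fin.coe_natAdd, Fin.coe_castAdd, hi0]; omega
      · simp only [hu1, Fin.ne_iff_vne, Fin.coe_natAdd, Fin.coe_castAdd, hi1]; omega
    have hCmemA : ∀ k : Fin (n + m), k ≠ u0 → k ≠ u1 → S.x k ∈ A0 := by
      intro k h0 h1'
      exact Algebra.subset_adjoin (Set.mem_union_right _ ⟨k, h0, h1', Or.inl rfl⟩)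
    have hCmemI : ∀ k : Fin (n + m), k ≠ u0 → k ≠ u1 → (S.x k)⁻¹ ∈ A0 := by
      intro k h0 h1'
      exact Algebra.subset_adjoin (Set.mem_union_right _ ⟨k, h0, h1', Or.inr rfl⟩)
    have hx2A0' : S.x u1 ∈ A0 := Algebra.subset_adjoin (Set.mem_union_left _ (by simp))
    have hu10 : u1 ≠ u0 := Ne.symm hu01
    have hmemu1 : u1 ∈ Finset.univ.erase u0 :=
      Finset.mem_erase.mpr ⟨hu10, Finset.mem_univ _⟩
    have hβu0i0 : S.β u0 i0 = 0 := by
      have := hβ1 u0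
      rw [hdiag i0] at this
      exact mul_left_cancel₀ hd1ne (by rw [this]; ring)
    have hβu1i1 : S.β u1 i1 = 0 := by
      have := hβ2 u1
      rw [hBu1i1] at this
      exact mul_left_cancel₀ hdne (by rw [this]; ring)
    have hX1 : S.exch i0 = ∑ l ∈ Finset.range (S.d i0 + 1),
        aeval S.x (rename (Fin.natAdd n) (S.ρ i0 l)) *
          ∏ k ∈ Finset.univ.erase u0, S.x k ^ expE S k i0 l := by
      rw [exch_expand S i0 u0]
      refine Finset.sum_congr rfl fun l hl => ?_
      rw [show expE S u0 i0 l = 0 from by rw [expE, hβu0i0]; simp, pow_zero, one_mul]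
    have hX2 : S.exch i1 = ∑ j ∈ Finset.range (S.d i1 + 1),
        aeval S.x (rename (Fin.natAdd n) (S.ρ i1 j)) *
          (S.x u0 ^ expE S u0 i1 j *
            ∏ k ∈ Finset.univ.erase u0, S.x k ^ expE S k i1 j) := exch_expand S i1 u0
    have hX2' : S1.exch i1 = ∑ j ∈ Finset.range (S.d i1 + 1),
        aeval S.x (rename (Fin.natAdd n) (S.ρ i1 j)) *
          (y ^ expE S1 u0 i1 j *
            ∏ k ∈ Finset.univ.erase u0, S.x k ^ expE S1 k i1 j) := by
      rw [exch_expand S1 i1 u0, hS1d]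
      refine Finset.sum_congr rfl fun j hj => ?_
      have hj' : j ≤ S.d i1 := by
        have := Finset.mem_range.mp hj; omega
      rw [hρo i1 hi01 j hj', hren]
      congr 2
      · rw [hS1x, Function.update_self]
      · exact Finset.prod_congr rfl fun k hk =>
          by rw [hS1xo k (Finset.ne_of_mem_erase hk)]
    -- helper for products of maxes
    have hmaxmul : ∀ (dd : ℤ) (w : ℤ), 0 ≤ dd → max (dd * w) 0 = dd * max w 0 := by
      intro dd w hdd
      rw [mul_max_of_nonneg _ _ hdd, mul_zero]
    rcases lt_or_gt_of_ne (fun hzz => hb0 hzz : S.B u0 i1 ≠ 0) with hblt | hbgt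
    · -- b < 0
      have hβneg : S.β u0 i1 < 0 := by
        by_contra hle
        push_neg at hle
        have h0 : 0 ≤ (S.d i1 : ℤ) * S.β u0 i1 := mul_nonneg (by positivity) hle
        rw [hβ2 u0] at h0
        omega
      have hcpos : 0 < S.B u1 i0 := by
        nlinarith [hDpos i0, hDpos i1, mul_pos (hDpos i0) (neg_pos.mpr hblt)]
      have hβ1u1pos : 0 < S.β u1 i0 := by
        by_contra hle
        push_neg at hle
        have h0 : (S.d i0 : ℤ) * S.β u1 i0 ≤ 0 :=
          mul_nonpos_of_nonneg_of_nonpos (by positivity) hle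
        rw [hβ1 u1] at h0
        omega
      have hS1βu0 : S1.β u0 i1 = -S.β u0 i1 := by
        refine mul_left_cancel₀ hdne ?_
        rw [hβ2' u0, hS1Bu0, ← hβ2 u0]
        ring
      have ht' : ∀ k, k ≠ u0 → S1.β k i1 = S.β k i1 +
          S.β u0 i1 * ((S.d i0 : ℤ) * max (-(S.β k i0)) 0) := by
        intro k hk0
        refine mul_left_cancel₀ hdne ?_
        have a2 := hS1Bk k hk0
        have a5 : max (S.B u0 i1) 0 = 0 := max_eq_right hblt.le
        have a7 : max (-(S.B k i0)) 0 = (S.d i0 : ℤ) * max (-(S.β k i0)) 0 := by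
          rw [← hmaxmul _ _ (by positivity)]
          congr 1
          rw [← hβ1 k]
          ring
        have a4 := hβ2 u0
        rw [a5] at a2
        linear_combination (hβ2' k) + a2 - hβ2 k + S.B u0 i1 * a7 -
          ((S.d i0 : ℤ) * max (-(S.β k i0)) 0) * a4
      refine ⟨S.d i1 * (-S.β u0 i1).toNat, fun j => (S.d i1 - j) * (-S.β u0 i1).toNat,
        fun j => j * (-S.β u0 i1).toNat,
        fun j => aeval S.x (rename (Fin.natAdd n) (S.ρ i1 j)),
        fun j => ∏ k ∈ Finset.univ.erase u0, S.x k ^ expE S k i1 j,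
        fun j => ∏ k ∈ Finset.univ.erase u0, S.x k ^ expE S1 k i1 j,
        ∏ k ∈ Finset.univ.erase u0, S.x k ^ expE S k i0 0,
        ∏ k ∈ Finset.univ.erase u0,
          S.x k ^ ((S.d i1 : ℤ) * (max (S1.β k i1) 0 - max (S.β k i1) 0)),
        ∑ l ∈ Finset.range (S.d i0), aeval S.x (rename (Fin.natAdd n) (S.ρ i0 (l + 1))) *
          (S.x u1 ^ (expE S u1 i0 (l + 1) - 1) *
            ∏ k ∈ (Finset.univ.erase u0).erase u1, S.x k ^ expE S k i0 (l + 1)),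
        ?_, ?_, ?_, ?_, ?_, ?_, ?_, ?_, ?_, ⟨?_, ?_⟩, ⟨?_, ?_⟩, ?_⟩
      · -- p + q = P
        intro j hj
        have := Finset.mem_range.mp hj
        rw [← add_mul]
        congr 1
        omega
      · -- expansion of exch S i1
        rw [hX2]
        refine Finset.sum_congr rfl fun j hj => ?_
        have he : expE S u0 i1 j = (S.d i1 - j) * (-S.β u0 i1).toNat := by
          rw [expE, max_eq_right hβneg.le, max_eq_left (by omega : (0:ℤ) ≤ -S.β u0 i1)]
          simp
        rw [he]
      · -- expansion of exch S1 i1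
        rw [hX2']
        refine Finset.sum_congr rfl fun j hj => ?_
        have he : expE S1 u0 i1 j = j * (-S.β u0 i1).toNat := by
          rw [expE, hS1d, hS1βu0, neg_neg, max_eq_right hβneg.le,
            max_eq_left (by omega : (0:ℤ) ≤ -S.β u0 i1)]
          simp
        rw [he]
      · -- M' j = Efac * (M j * N ^ p j)
        intro j hj
        have hj' : j ≤ S.d i1 := by have := Finset.mem_range.mp hj; omega
        rw [← Finset.prod_pow, ← Finset.prod_mul_distrib, ← Finset.prod_mul_distrib]
        refine Finset.prod_congr rfl fun k hk => ?_
        have hk0 : k ≠ u0 := Finset.ne_of_mem_erase hk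
        have hxk := hx k
        refine pow_eq_zpow_helper hxk _ _ _ _ _ ?_
        have hA : max (S1.β k i1) 0 - max (-(S1.β k i1)) 0 = S1.β k i1 := by omega
        have hB' : max (S.β k i1) 0 - max (-(S.β k i1)) 0 = S.β k i1 := by omega
        have htk := ht' k hk0
        simp only [expE, hS1d]
        push_cast [Nat.cast_sub hj', Nat.sub_zero]
        rw [Int.toNat_of_nonneg (le_max_right (S1.β k i1) 0),
          Int.toNat_of_nonneg (le_max_right (-(S1.β k i1)) 0),
          Int.toNat_of_nonneg (le_max_right (S.β k i1) 0),
          Int.toNat_of_nonneg (le_max_right (-(S.β k i1)) 0),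
          Int.toNat_of_nonneg (le_max_right (S.β k i0) 0),
          Int.toNat_of_nonneg (le_max_right (-(S.β k i0)) 0),
          Int.toNat_of_nonneg (by omega : (0:ℤ) ≤ -S.β u0 i1)]
        linear_combination (-((S.d i1 : ℤ) - (j : ℤ))) * hA +
          ((S.d i1 : ℤ) - (j : ℤ)) * hB' - ((S.d i1 : ℤ) - (j : ℤ)) * htk
      · -- exch S i0 = N + x2 * h
        rw [hX1, Finset.sum_range_succ']
        have hfirst : aeval S.x (rename (Fin.natAdd n) (S.ρ i0 0)) = 1 := by
          rw [S.ρ_zero i0, map_one, map_one]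
        rw [hfirst, one_mul]
        rw [add_comm _ (∏ k ∈ Finset.univ.erase u0, S.x k ^ expE S k i0 0)]
        congr 1
        rw [Finset.mul_sum]
        refine Finset.sum_congr rfl fun l hl => ?_
        rw [← Finset.mul_prod_erase _ _ hmemu1]
        have hE1 : 1 ≤ expE S u1 i0 (l + 1) := by
          rw [expE]
          have h2 : 1 ≤ (max (S.β u1 i0) 0).toNat := by
            rw [max_eq_left hβ1u1pos.le]
            omega
          have h3 := Nat.mul_le_mul (show 1 ≤ l + 1 by omega) h2
          omega
        obtain ⟨e2, he2⟩ : ∃ e2, expE S u1 i0 (l + 1) = e2 + 1 :=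
          ⟨expE S u1 i0 (l + 1) - 1, by omega⟩
        rw [he2, Nat.add_sub_cancel, pow_succ]
        ring
      · -- N ≠ 0
        exact Finset.prod_ne_zero_iff.mpr fun k _ => pow_ne_zero _ (hx k)
      · -- Efac ≠ 0
        exact Finset.prod_ne_zero_iff.mpr fun k _ => zpow_ne_zero _ (hx k)
      · -- r j ∈ A0
        exact fun j => hr1A i1 j
      · -- M j ∈ A0
        intro j
        refine A0.prod_mem fun k hk => ?_
        by_cases hk1 : k = u1
        · subst hk1; exact A0.pow_mem hx2A0' _
        · exact A0.pow_mem (hCmemA k (Finset.ne_of_mem_erase hk) hk1) _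
      · -- N ∈ A0
        refine A0.prod_mem fun k hk => ?_
        by_cases hk1 : k = u1
        · subst hk1; exact A0.pow_mem hx2A0' _
        · exact A0.pow_mem (hCmemA k (Finset.ne_of_mem_erase hk) hk1) _
      · -- N⁻¹ ∈ A0
        rw [← Finset.prod_inv_distrib]
        refine A0.prod_mem fun k hk => ?_
        by_cases hk1 : k = u1
        · subst hk1
          have hz : expE S u1 i0 0 = 0 := by
            rw [expE]
            rw [show (max (-(S.β u1 i0)) 0).toNat = 0 from
              by rw [max_eq_right (by omega : -(S.β u1 i0) ≤ 0)]; rfl]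
            simp
          rw [hz, pow_zero, inv_one]
          exact A0.one_mem
        · rw [← inv_pow]
          exact A0.pow_mem (hCmemI k (Finset.ne_of_mem_erase hk) hk1) _
      · -- Efac ∈ A0
        refine A0.prod_mem fun k hk => ?_
        by_cases hk1 : k = u1
        · subst hk1
          have hS1βu1 : S1.β u1 i1 = 0 := by
            refine mul_left_cancel₀ hdne ?_
            rw [hβ2' u1, hS1Bk u1 hu10, hBu1i1, max_eq_right hblt.le,
              max_eq_right (by omega : -S.B u1 i0 ≤ 0)]
            ring
          rw [hS1βu1, hβu1i1]
          norm_num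
        · exact zpow_mem_of (hCmemA k (Finset.ne_of_mem_erase hk) hk1)
            (hCmemI k (Finset.ne_of_mem_erase hk) hk1) _
      · -- Efac⁻¹ ∈ A0
        rw [← Finset.prod_inv_distrib]
        refine A0.prod_mem fun k hk => ?_
        rw [← zpow_neg]
        by_cases hk1 : k = u1
        · subst hk1
          have hS1βu1 : S1.β u1 i1 = 0 := by
            refine mul_left_cancel₀ hdne ?_
            rw [hβ2' u1, hS1Bk u1 hu10, hBu1i1, max_eq_right hblt.le,
              max_eq_right (by omega : -S.B u1 i0 ≤ 0)]
            ring
          rw [hS1βu1, hβu1i1]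
          norm_num
        · exact zpow_mem_of (hCmemA k (Finset.ne_of_mem_erase hk) hk1)
            (hCmemI k (Finset.ne_of_mem_erase hk) hk1) _
      · -- h ∈ A0
        refine A0.sum_mem fun l _ => A0.mul_mem (hr1A i0 (l + 1)) (A0.mul_mem
          (A0.pow_mem hx2A0' _) (A0.prod_mem fun k hk => ?_))
        have hk1 : k ≠ u1 := Finset.ne_of_mem_erase hk
        have hk0 : k ≠ u0 := Finset.ne_of_mem_erase (Finset.mem_of_mem_erase hk)
        exact A0.pow_mem (hCmemA k hk0 hk1) _
    · -- b > 0
      have hβpos : 0 < S.β u0 i1 := by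
        by_contra hle
        push_neg at hle
        have h0 : (S.d i1 : ℤ) * S.β u0 i1 ≤ 0 :=
          mul_nonpos_of_nonneg_of_nonpos (by positivity) hle
        rw [hβ2 u0] at h0
        omega
      have hcneg : S.B u1 i0 < 0 := by
        nlinarith [hDpos i0, hDpos i1, mul_pos (hDpos i0) hbgt]
      have hβ1u1neg : S.β u1 i0 < 0 := by
        by_contra hle
        push_neg at hle
        have h0 : 0 ≤ (S.d i0 : ℤ) * S.β u1 i0 := mul_nonneg (by positivity) hle
        rw [hβ1 u1] at h0
        omega
      have hS1βu0 : S1.β u0 i1 = -S.β u0 i1 := by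
        refine mul_left_cancel₀ hdne ?_
        rw [hβ2' u0, hS1Bu0, ← hβ2 u0]
        ring
      -- the key mutation identity for β
      have ht' : ∀ k, k ≠ u0 → S1.β k i1 = S.β k i1 +
          S.β u0 i1 * ((S.d i0 : ℤ) * max (S.β k i0) 0) := by
        intro k hk0
        refine mul_left_cancel₀ hdne ?_
        have a2 := hS1Bk k hk0
        have a5 : max (S.B u0 i1) 0 = S.B u0 i1 := max_eq_left hbgt.le
        have a6 : S.B k i0 + max (-(S.B k i0)) 0 = max (S.B k i0) 0 := by omega
        have a7 : max (S.B k i0) 0 = (S.d i0 : ℤ) * max (S.β k i0) 0 := by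
          rw [← hmaxmul _ _ (by positivity), hβ1 k]
        have a4 := hβ2 u0
        rw [a5] at a2
        linear_combination (hβ2' k) + a2 - hβ2 k + S.B u0 i1 * a6 + S.B u0 i1 * a7 -
          (↑(S.d i0) * max (S.β k i0) 0) * a4
      refine ⟨S.d i1 * (S.β u0 i1).toNat, fun j => j * (S.β u0 i1).toNat,
        fun j => (S.d i1 - j) * (S.β u0 i1).toNat,
        fun j => aeval S.x (rename (Fin.natAdd n) (S.ρ i1 j)),
        fun j => ∏ k ∈ Finset.univ.erase u0, S.x k ^ expE S k i1 j,
        fun j => ∏ k ∈ Finset.univ.erase u0, S.x k ^ expE S1 k i1 j,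
        ∏ k ∈ Finset.univ.erase u0, S.x k ^ expE S k i0 (S.d i0),
        ∏ k ∈ Finset.univ.erase u0,
          S.x k ^ ((S.d i1 : ℤ) * (max (-(S1.β k i1)) 0 - max (-(S.β k i1)) 0)),
        ∑ l ∈ Finset.range (S.d i0), aeval S.x (rename (Fin.natAdd n) (S.ρ i0 l)) *
          (S.x u1 ^ (expE S u1 i0 l - 1) *
            ∏ k ∈ (Finset.univ.erase u0).erase u1, S.x k ^ expE S k i0 l),
        ?_, ?_, ?_, ?_, ?_, ?_, ?_, ?_, ?_, ⟨?_, ?_⟩, ⟨?_, ?_⟩, ?_⟩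
      · -- p + q = P
        intro j hj
        have := Finset.mem_range.mp hj
        rw [← add_mul]
        congr 1
        omega
      · -- expansion of exch S i1
        rw [hX2]
        refine Finset.sum_congr rfl fun j hj => ?_
        have he : expE S u0 i1 j = j * (S.β u0 i1).toNat := by
          rw [expE, max_eq_left hβpos.le, max_eq_right (by omega : -S.β u0 i1 ≤ 0)]
          simp
        rw [he]
      · -- expansion of exch S1 i1
        rw [hX2']
        refine Finset.sum_congr rfl fun j hj => ?_
        have he : expE S1 u0 i1 j = (S.d i1 - j) * (S.β u0 i1).toNat := by
          rw [expE, hS1d, hS1βu0, neg_neg, max_eq_left hβpos.le,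
            max_eq_right (by omega : -S.β u0 i1 ≤ 0)]
          simp
        rw [he]
      · -- M' j = Efac * (M j * N ^ p j)
        intro j hj
        have hj' : j ≤ S.d i1 := by have := Finset.mem_range.mp hj; omega
        rw [← Finset.prod_pow, ← Finset.prod_mul_distrib, ← Finset.prod_mul_distrib]
        refine Finset.prod_congr rfl fun k hk => ?_
        have hk0 : k ≠ u0 := Finset.ne_of_mem_erase hk
        have hxk := hx k
        refine pow_eq_zpow_helper hxk _ _ _ _ _ ?_
        have hA : max (S1.β k i1) 0 - max (-(S1.β k i1)) 0 = S1.β k i1 := by omega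
        have hB' : max (S.β k i1) 0 - max (-(S.β k i1)) 0 = S.β k i1 := by omega
        have htk := ht' k hk0
        simp only [expE, hS1d]
        push_cast [Nat.cast_sub hj', Nat.sub_self]
        rw [Int.toNat_of_nonneg (le_max_right (S1.β k i1) 0),
          Int.toNat_of_nonneg (le_max_right (-(S1.β k i1)) 0),
          Int.toNat_of_nonneg (le_max_right (S.β k i1) 0),
          Int.toNat_of_nonneg (le_max_right (-(S.β k i1)) 0),
          Int.toNat_of_nonneg (le_max_right (S.β k i0) 0),
          Int.toNat_of_nonneg (le_max_right (-(S.β k i0)) 0),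
          Int.toNat_of_nonneg hβpos.le]
        linear_combination (j : ℤ) * hA - (j : ℤ) * hB' + (j : ℤ) * htk
      · -- exch S i0 = N + x2 * h
        rw [hX1, Finset.sum_range_succ]
        have hlast : aeval S.x (rename (Fin.natAdd n) (S.ρ i0 (S.d i0))) = 1 := by
          rw [S.ρ_last i0, map_one, map_one]
        rw [hlast, one_mul, add_comm]
        congr 1
        rw [Finset.mul_sum]
        refine Finset.sum_congr rfl fun l hl => ?_
        have hl' : l < S.d i0 := Finset.mem_range.mp hl
        rw [← Finset.mul_prod_erase _ _ hmemu1]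
        have hE1 : 1 ≤ expE S u1 i0 l := by
          rw [expE]
          have h1 : (max (S.β u1 i0) 0).toNat = 0 := by
            rw [max_eq_right hβ1u1neg.le]; rfl
          have h2 : 1 ≤ (max (-(S.β u1 i0)) 0).toNat := by
            rw [max_eq_left (by omega : (0:ℤ) ≤ -S.β u1 i0)]
            omega
          have h3 := Nat.mul_le_mul (show 1 ≤ S.d i0 - l by omega) h2
          omega
        obtain ⟨e2, he2⟩ : ∃ e2, expE S u1 i0 l = e2 + 1 :=
          ⟨expE S u1 i0 l - 1, by omega⟩
        rw [he2, Nat.add_sub_cancel, pow_succ]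
        ring
      · -- N ≠ 0
        exact Finset.prod_ne_zero_iff.mpr fun k _ => pow_ne_zero _ (hx k)
      · -- Efac ≠ 0
        exact Finset.prod_ne_zero_iff.mpr fun k _ => zpow_ne_zero _ (hx k)
      · -- r j ∈ A0
        exact fun j => hr1A i1 j
      · -- M j ∈ A0
        intro j
        refine A0.prod_mem fun k hk => ?_
        by_cases hk1 : k = u1
        · subst hk1; exact A0.pow_mem hx2A0' _
        · exact A0.pow_mem (hCmemA k (Finset.ne_of_mem_erase hk) hk1) _
      · -- N ∈ A0
        refine A0.prod_mem fun k hk => ?_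
        by_cases hk1 : k = u1
        · subst hk1; exact A0.pow_mem hx2A0' _
        · exact A0.pow_mem (hCmemA k (Finset.ne_of_mem_erase hk) hk1) _
      · -- N⁻¹ ∈ A0
        rw [← Finset.prod_inv_distrib]
        refine A0.prod_mem fun k hk => ?_
        by_cases hk1 : k = u1
        · subst hk1
          have hz : expE S u1 i0 (S.d i0) = 0 := by
            rw [expE]
            rw [show (max (S.β u1 i0) 0).toNat = 0 from
              by rw [max_eq_right hβ1u1neg.le]; rfl]
            simp
          rw [hz, pow_zero, inv_one]
          exact A0.one_mem
        · rw [← inv_pow]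
          exact A0.pow_mem (hCmemI k (Finset.ne_of_mem_erase hk) hk1) _
      · -- Efac ∈ A0
        refine A0.prod_mem fun k hk => ?_
        by_cases hk1 : k = u1
        · subst hk1
          have hS1βu1 : S1.β u1 i1 = 0 := by
            refine mul_left_cancel₀ hdne ?_
            rw [hβ2' u1, hS1Bk u1 hu10, hBu1i1, max_eq_left hbgt.le,
              max_eq_left (by omega : (0:ℤ) ≤ -S.B u1 i0)]
            ring
          rw [hS1βu1, hβu1i1]
          norm_num
        · exact zpow_mem_of (hCmemA k (Finset.ne_of_mem_erase hk) hk1)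
            (hCmemI k (Finset.ne_of_mem_erase hk) hk1) _
      · -- Efac⁻¹ ∈ A0
        rw [← Finset.prod_inv_distrib]
        refine A0.prod_mem fun k hk => ?_
        rw [← zpow_neg]
        by_cases hk1 : k = u1
        · subst hk1
          have hS1βu1 : S1.β u1 i1 = 0 := by
            refine mul_left_cancel₀ hdne ?_
            rw [hβ2' u1, hS1Bk u1 hu10, hBu1i1, max_eq_left hbgt.le,
              max_eq_left (by omega : (0:ℤ) ≤ -S.B u1 i0)]
            ring
          rw [hS1βu1, hβu1i1]
          norm_num
        · exact zpow_mem_of (hCmemA k (Finset.ne_of_mem_erase hk) hk1)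
            (hCmemI k (Finset.ne_of_mem_erase hk) hk1) _
      · -- h ∈ A0
        refine A0.sum_mem fun l _ => A0.mul_mem (hr1A i0 l) (A0.mul_mem
          (A0.pow_mem hx2A0' _) (A0.prod_mem fun k hk => ?_))
        have hk1 : k ≠ u1 := Finset.ne_of_mem_erase hk
        have hk0 : k ≠ u0 := Finset.ne_of_mem_erase (Finset.mem_of_mem_erase hk)
        exact A0.pow_mem (hCmemA k hk0 hk1) _
  have hx1A0 : S.x u0 ∈ A0 := Algebra.subset_adjoin (Set.mem_union_left _ (by simp))
  have hyA0 : y ∈ A0 := Algebra.subset_adjoin (Set.mem_union_left _ (by simp))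
  have hx2A0 : S.x u1 ∈ A0 := Algebra.subset_adjoin (Set.mem_union_left _ (by simp))
  have hf1A0 : S.exch i0 ∈ A0 := by rw [← hf1]; exact A0.mul_mem hx1A0 hyA0
  have hA0le : ∀ w : F, A0 ≤ Algebra.adjoin R ({S.x u0, y, S.x u1, w} ∪ Cset) := by
    intro w
    refine Algebra.adjoin_mono ?_
    intro z hz
    rcases hz with hz | hz
    · refine Set.mem_union_left _ ?_
      simp only [Set.mem_insert_iff, Set.mem_singleton_iff] at hz ⊢
      rcases hz with hz | hz | hz
      · exact Or.inl hz
      · exact Or.inr (Or.inl hz)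
      · exact Or.inr (Or.inr (Or.inl hz))
    · exact Set.mem_union_right _ hz
  have hgeomgen : ∀ e : ℕ, S.exch i0 ^ e = N ^ e + S.x u1 * (h *
      ∑ t ∈ Finset.range e, S.exch i0 ^ t * N ^ (e - 1 - t)) := by
    intro e
    have hg := geom_sum₂_mul (S.exch i0) N e
    have hfn : S.exch i0 - N = S.x u1 * h := by rw [hE2]; ring
    rw [hfn] at hg
    linear_combination -hg
  -- first key identity
  have hmem1 : S1.exch i1 / S.x u1 ∈
      Algebra.adjoin R ({S.x u0, y, S.x u1, S.exch i1 / S.x u1} ∪ Cset) := by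
    set AL := Algebra.adjoin R ({S.x u0, y, S.x u1, S.exch i1 / S.x u1} ∪ Cset) with hAL
    have hle := hA0le (S.exch i1 / S.x u1)
    set G : F := ∑ j ∈ Finset.range (S.d i1 + 1), r j * (y ^ q j * (M j * (h *
        ∑ t ∈ Finset.range (p j), S.exch i0 ^ t * N ^ (p j - 1 - t)))) with hG
    have hkey : S1.exch i1 = Efac * (y ^ P * S.exch i1 - S.x u1 * G) := by
      rw [hC2, hB2, hG, Finset.mul_sum, Finset.mul_sum, ← Finset.sum_sub_distrib,
        Finset.mul_sum]
      refine Finset.sum_congr rfl fun j hj => ?_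
      rw [hD2 j hj]
      have hP : P = p j + q j := (hpq j hj).symm
      have hyP : y ^ P * S.x u0 ^ p j = y ^ q j * S.exch i0 ^ p j := by
        rw [hP, pow_add, ← hf1, mul_pow]; ring
      have hge := hgeomgen (p j)
      linear_combination (-(r j * (Efac * (y ^ q j * M j)))) * hge -
        (Efac * (r j * M j)) * hyP
    have hdiv : S1.exch i1 / S.x u1 = Efac * (y ^ P * (S.exch i1 / S.x u1) - G) := by
      rw [hkey, mul_div_assoc, sub_div, mul_div_assoc, mul_div_cancel_left₀ _ hx2]
    rw [hdiv]
    have hyAL : y ∈ AL := Algebra.subset_adjoin (Set.mem_union_left _ (by simp))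
    have hx2'AL : S.exch i1 / S.x u1 ∈ AL :=
      Algebra.subset_adjoin (Set.mem_union_left _ (by simp))
    refine AL.mul_mem (hle hEfA) (AL.sub_mem (AL.mul_mem (AL.pow_mem hyAL P) hx2'AL) ?_)
    rw [hG]
    refine AL.sum_mem fun j _ => AL.mul_mem (hle (hrA j)) (AL.mul_mem (AL.pow_mem hyAL _)
      (AL.mul_mem (hle (hMA j)) (AL.mul_mem (hle hhA)
        (AL.sum_mem fun t _ => AL.mul_mem (AL.pow_mem (hle hf1A0) _)
          (AL.pow_mem (hle hNA) _)))))
  -- second key identity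
  have hmem2 : S.exch i1 / S.x u1 ∈
      Algebra.adjoin R ({S.x u0, y, S.x u1, S1.exch i1 / S.x u1} ∪ Cset) := by
    set AR := Algebra.adjoin R ({S.x u0, y, S.x u1, S1.exch i1 / S.x u1} ∪ Cset) with hAR
    have hle := hA0le (S1.exch i1 / S.x u1)
    set G2 : F := ∑ j ∈ Finset.range (S.d i1 + 1), r j * (S.x u0 ^ p j * (M j * (N ^ p j * (h *
        ∑ t ∈ Finset.range (q j), S.exch i0 ^ t * N ^ (q j - 1 - t))))) with hG2
    have hkey2 : S.x u0 ^ P * S1.exch i1 = Efac * (N ^ P * S.exch i1) + S.x u1 * (Efac * G2) := by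
      rw [hC2, hB2, hG2, Finset.mul_sum, Finset.mul_sum, Finset.mul_sum, Finset.mul_sum,
        Finset.mul_sum, ← Finset.sum_add_distrib]
      refine Finset.sum_congr rfl fun j hj => ?_
      rw [hD2 j hj]
      have hP : P = p j + q j := (hpq j hj).symm
      have hx1P : S.x u0 ^ P * y ^ q j = S.x u0 ^ p j * S.exch i0 ^ q j := by
        rw [hP, pow_add, ← hf1, mul_pow]; ring
      have hNP : N ^ P = N ^ p j * N ^ q j := by rw [hP, pow_add]
      have hge := hgeomgen (q j)
      linear_combination (r j * (Efac * (M j * N ^ p j))) * hx1P +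
        (r j * (Efac * (M j * (N ^ p j * S.x u0 ^ p j)))) * hge -
        (Efac * (r j * (S.x u0 ^ p j * M j))) * hNP
    have hNP0 : N ^ P ≠ 0 := pow_ne_zero _ hN0
    have e1 : S.exch i1 = Efac⁻¹ * N⁻¹ ^ P *
        (S.x u0 ^ P * S1.exch i1 - S.x u1 * (Efac * G2)) := by
      have h2 : Efac⁻¹ * N⁻¹ ^ P * (Efac * (N ^ P * S.exch i1)) = S.exch i1 := by
        rw [inv_pow]; field_simp
      have h3 : Efac * (N ^ P * S.exch i1) =
          S.x u0 ^ P * S1.exch i1 - S.x u1 * (Efac * G2) := by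
        linear_combination -hkey2
      rw [← h2, h3]
    have hdiv2 : S.exch i1 / S.x u1 =
        Efac⁻¹ * N⁻¹ ^ P * (S.x u0 ^ P * (S1.exch i1 / S.x u1) - Efac * G2) := by
      rw [e1, mul_div_assoc, sub_div, mul_div_assoc, mul_div_cancel_left₀ _ hx2]
    rw [hdiv2]
    have hx1AR : S.x u0 ∈ AR := Algebra.subset_adjoin (Set.mem_union_left _ (by simp))
    have hx2''AR : S1.exch i1 / S.x u1 ∈ AR :=
      Algebra.subset_adjoin (Set.mem_union_left _ (by simp))
    refine AR.mul_mem (AR.mul_mem (hle hEfiA) (AR.pow_mem (hle hNiA) P))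
      (AR.sub_mem (AR.mul_mem (AR.pow_mem hx1AR P) hx2''AR) (AR.mul_mem (hle hEfA) ?_))
    rw [hG2]
    refine AR.sum_mem fun j _ => AR.mul_mem (hle (hrA j)) (AR.mul_mem (AR.pow_mem hx1AR _)
      (AR.mul_mem (hle (hMA j)) (AR.mul_mem (AR.pow_mem (hle hNA) _)
        (AR.mul_mem (hle hhA)
          (AR.sum_mem fun t _ => AR.mul_mem (AR.pow_mem (hle hf1A0) _)
            (AR.pow_mem (hle hNA) _))))))
  -- conclude
  apply le_antisymm
  · refine Algebra.adjoin_le ?_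
    intro z hz
    rcases hz with hz | hz
    · simp only [Set.mem_insert_iff, Set.mem_singleton_iff] at hz
      rcases hz with rfl | rfl | rfl | rfl
      · exact Algebra.subset_adjoin (Set.mem_union_left _ (by simp))
      · exact Algebra.subset_adjoin (Set.mem_union_left _ (by simp))
      · exact Algebra.subset_adjoin (Set.mem_union_left _ (by simp))
      · exact hmem2
    · exact Algebra.subset_adjoin (Set.mem_union_right _ hz)
  · refine Algebra.adjoin_le ?_
    intro z hz
    rcases hz with hz | hz
    · simp only [Set.mem_insert_iff, Set.mem_singleton_iff] at hz
      rcases hz with rfl | rfl | rfl | rfl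
      · exact Algebra.subset_adjoin (Set.mem_union_left _ (by simp))
      · exact Algebra.subset_adjoin (Set.mem_union_left _ (by simp))
      · exact Algebra.subset_adjoin (Set.mem_union_left _ (by simp))
      · exact hmem1
    · exact Algebra.subset_adjoin (Set.mem_union_right _ hz)

end Statements
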